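/- Let ψ(ρ, λ̄) = [1/(e−2) + h_c(ν)μ(ν, q_c(ρ), k_m)](1 − e^{−ρ} − ρe^{−ρ}) − [1 + h_0(ν)μ(ν, q_0(ρ), k_m)]e^{−ρ} + ρe^{−ρ} − λ̄. For any fixed λ̄, ψ(·, λ̄) is strictly increasing in ρ on (0, ∞). -/

import Mathlib

noncomputable def mu (ν q : ℝ) (km : ℕ) : ℝ :=
  ∑ k ∈ Finset.Icc 1 (km - 1), (k : ℝ) ^ ν * q ^ (k - 1) * (1 - q)
    + (km : ℝ) ^ ν * q ^ (km - 1)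

noncomputable def q0 (ρ : ℝ) : ℝ := Real.exp (-ρ)
noncomputable def qc (ρ : ℝ) : ℝ := 1 - Real.exp (-ρ) - ρ * Real.exp (-ρ)

noncomputable def h0 (η ν : ℝ) (km : ℕ) : ℝ := η / (Real.exp (-1) * mu ν (Real.exp (-1)) km)
noncomputable def hc (η ν : ℝ) (km : ℕ) : ℝ :=
  η / ((1 - 2 * Real.exp (-1)) * mu ν (1 - 2 * Real.exp (-1)) km)

/-- The FASA estimate-error drift ψ(ρ, λ̄). -/
noncomputable def ψdrift (η ν : ℝ) (km : ℕ) (lamBar ρ : ℝ) : ℝ :=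
  (1 / (Real.exp 1 - 2) + hc η ν km * mu ν (qc ρ) km) * (1 - Real.exp (-ρ) - ρ * Real.exp (-ρ))
    - (1 + h0 η ν km * mu ν (q0 ρ) km) * Real.exp (-ρ) + ρ * Real.exp (-ρ) - lamBar

lemma mu_eq (ν q : ℝ) (km : ℕ) (hkm : 2 ≤ km) :
    mu ν q km = 1 + ∑ k ∈ Finset.Icc 2 km, ((k : ℝ) ^ ν - ((k - 1 : ℕ) : ℝ) ^ ν) * q ^ (k - 1) := by
  induction km, hkm using Nat.le_induction with
  | base =>
      simp [mu, Finset.Icc_self, Real.one_rpow]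
      norm_num
      ring
  | succ n hn ih =>
      have h1 : (n + 1 : ℕ) - 1 = n := by omega
      have h2 : Finset.Icc 1 n = Finset.Icc 1 ((n-1) + 1) := by congr 1; omega
      have h3 : (n - 1 : ℕ) + 1 = n := by omega
      have hmu : mu ν q (n+1) = mu ν q n + (((n+1 : ℕ) : ℝ) ^ ν - (n : ℝ) ^ ν) * q ^ n := by
        rw [mu, mu, h1, h2, Finset.sum_Icc_succ_top (by omega), h3]
        have hq : q ^ (n - 1) * q = q ^ n := by
          rw [← pow_succ, h3]
        push_cast
        linear_combination (-(n:ℝ)^ν) * hq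
      rw [hmu, ih, Finset.sum_Icc_succ_top (by omega : 2 ≤ n + 1)]
      have : ((n + 1 : ℕ) - 1 : ℕ) = n := by omega
      rw [this]
      push_cast
      ring

lemma mu_strictMonoOn (ν : ℝ) (hν : 0 < ν) (km : ℕ) (hkm : 2 ≤ km) :
    StrictMonoOn (fun q => mu ν q km) (Set.Ici (0 : ℝ)) := by
  intro a ha b hb hab
  simp only [Set.mem_Ici] at ha hb
  simp only [mu_eq ν _ km hkm]
  have hmem : km ∈ Finset.Icc 2 km := Finset.mem_Icc.mpr ⟨hkm, le_refl _⟩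
  have hsum : ∑ k ∈ Finset.Icc 2 km, ((k : ℝ) ^ ν - ((k - 1 : ℕ) : ℝ) ^ ν) * a ^ (k - 1)
      < ∑ k ∈ Finset.Icc 2 km, ((k : ℝ) ^ ν - ((k - 1 : ℕ) : ℝ) ^ ν) * b ^ (k - 1) := by
    apply Finset.sum_lt_sum
    · intro k hk
      have hk2 : 2 ≤ k := (Finset.mem_Icc.mp hk).1
      have hcoef : (0 : ℝ) ≤ (k : ℝ) ^ ν - ((k - 1 : ℕ) : ℝ) ^ ν := by
        have : ((k - 1 : ℕ) : ℝ) ^ ν ≤ (k : ℝ) ^ ν :=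
          Real.rpow_le_rpow (by positivity) (by exact_mod_cast Nat.sub_le k 1) hν.le
        linarith
      exact mul_le_mul_of_nonneg_left (pow_le_pow_left₀ ha hab.le _) hcoef
    · refine ⟨km, hmem, ?_⟩
      have hcoef : (0 : ℝ) < (km : ℝ) ^ ν - ((km - 1 : ℕ) : ℝ) ^ ν := by
        have : ((km - 1 : ℕ) : ℝ) ^ ν < (km : ℝ) ^ ν := by
          apply Real.rpow_lt_rpow (by positivity) _ hν
          exact_mod_cast Nat.sub_lt (by omega) one_pos
        linarith
      have hpow : a ^ (km - 1) < b ^ (km - 1) :=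
        pow_lt_pow_left₀ hab ha (by omega)
      exact mul_lt_mul_of_pos_left hpow hcoef
  linarith

lemma mu_ge_one (ν q : ℝ) (hν : 0 < ν) (hq : 0 ≤ q) (km : ℕ) (hkm : 2 ≤ km) :
    1 ≤ mu ν q km := by
  rw [mu_eq ν q km hkm]
  have : (0:ℝ) ≤ ∑ k ∈ Finset.Icc 2 km, ((k : ℝ) ^ ν - ((k - 1 : ℕ) : ℝ) ^ ν) * q ^ (k - 1) := by
    apply Finset.sum_nonneg
    intro k hk
    have hcoef : (0 : ℝ) ≤ (k : ℝ) ^ ν - ((k - 1 : ℕ) : ℝ) ^ ν := by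
      have : ((k - 1 : ℕ) : ℝ) ^ ν ≤ (k : ℝ) ^ ν :=
        Real.rpow_le_rpow (by positivity) (by exact_mod_cast Nat.sub_le k 1) hν.le
      linarith
    positivity
  linarith

lemma two_lt_e : (2 : ℝ) < Real.exp 1 := by
  have := Real.exp_one_gt_d9
  linarith

lemma e_lt_three : Real.exp 1 < 3 := by
  have := Real.exp_one_lt_d9
  linarith

lemma exp_neg_one_lt_half : Real.exp (-1) < 1/2 := by
  rw [Real.exp_neg]
  rw [inv_lt_comm₀ (Real.exp_pos 1) (by norm_num)]
  simpa using two_lt_e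

lemma h0_pos (η ν : ℝ) (hη : 0 < η) (hν : 0 < ν) (km : ℕ) (hkm : 2 ≤ km) :
    0 < h0 η ν km := by
  apply div_pos hη
  apply mul_pos (Real.exp_pos _)
  linarith [mu_ge_one ν (Real.exp (-1)) hν (Real.exp_pos _).le km hkm]

lemma hc_pos (η ν : ℝ) (hη : 0 < η) (hν : 0 < ν) (km : ℕ) (hkm : 2 ≤ km) :
    0 < hc η ν km := by
  have h1 : (0:ℝ) < 1 - 2 * Real.exp (-1) := by
    have := exp_neg_one_lt_half; linarith
  apply div_pos hη
  apply mul_pos h1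
  linarith [mu_ge_one ν (1 - 2 * Real.exp (-1)) hν h1.le km hkm]

lemma expneg_hasDeriv (ρ : ℝ) : HasDerivAt (fun x : ℝ => Real.exp (-x)) (-Real.exp (-ρ)) ρ := by
  simpa [Function.comp_def] using (Real.hasDerivAt_exp (-ρ)).comp ρ (hasDerivAt_neg ρ)

lemma xexpneg_hasDeriv (ρ : ℝ) :
    HasDerivAt (fun x : ℝ => x * Real.exp (-x)) (Real.exp (-ρ) - ρ * Real.exp (-ρ)) ρ := by
  have := (hasDerivAt_id ρ).mul (expneg_hasDeriv ρ)
  refine this.congr_deriv ?_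
  simp only [id_eq]
  ring

lemma qc_hasDeriv (ρ : ℝ) : HasDerivAt qc (ρ * Real.exp (-ρ)) ρ := by
  have := ((hasDerivAt_const ρ (1:ℝ)).sub (expneg_hasDeriv ρ)).sub (xexpneg_hasDeriv ρ)
  refine this.congr_deriv ?_
  ring

lemma qc_strictMonoOn : StrictMonoOn qc (Set.Ici (0 : ℝ)) := by
  apply strictMonoOn_of_deriv_pos (convex_Ici 0)
  · exact fun x _ => ((qc_hasDeriv x).continuousAt).continuousWithinAt
  · intro x hx
    rw [interior_Ici] at hx
    rw [(qc_hasDeriv x).deriv]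
    exact mul_pos hx (Real.exp_pos _)

lemma qc_pos {ρ : ℝ} (hρ : 0 < ρ) : 0 < qc ρ := by
  have h0 : qc 0 = 0 := by simp [qc]
  have := qc_strictMonoOn (Set.self_mem_Ici) (Set.mem_Ici.mpr hρ.le) hρ
  rwa [h0] at this

noncomputable def g1 (ρ : ℝ) : ℝ :=
  (1 / (Real.exp 1 - 2)) * qc ρ - Real.exp (-ρ) + ρ * Real.exp (-ρ)

lemma g1_strictMonoOn : StrictMonoOn g1 (Set.Ici (0 : ℝ)) := by
  have he2 : (0:ℝ) < Real.exp 1 - 2 := by linarith [two_lt_e]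
  have hc1 : (1:ℝ) < 1 / (Real.exp 1 - 2) := by
    rw [lt_div_iff₀ he2]
    linarith [e_lt_three]
  apply strictMonoOn_of_deriv_pos (convex_Ici 0)
  · apply Continuous.continuousOn
    have : Continuous qc := by
      unfold qc; continuity
    unfold g1; continuity
  · intro x hx
    rw [interior_Ici] at hx
    have hd : HasDerivAt g1
        ((1 / (Real.exp 1 - 2)) * (x * Real.exp (-x)) - (-Real.exp (-x))
          + (Real.exp (-x) - x * Real.exp (-x))) x := by
      exact (((qc_hasDeriv x).const_mul _).sub (expneg_hasDeriv x)).add (xexpneg_hasDeriv x)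
    rw [hd.deriv]
    have hex : 0 < Real.exp (-x) := Real.exp_pos _
    have : (1 / (Real.exp 1 - 2)) * (x * Real.exp (-x)) - x * Real.exp (-x)
        = (1 / (Real.exp 1 - 2) - 1) * (x * Real.exp (-x)) := by ring
    nlinarith [mul_pos (sub_pos.mpr hc1) (mul_pos hx hex)]

/-- For fixed λ̄, the drift ψ(·, λ̄) is strictly increasing on (0, ∞). -/
theorem psi_strictMono (η ν : ℝ) (hη : 0 < η) (hν : 0 < ν) (km : ℕ) (hkm : 2 ≤ km)
    (lamBar : ℝ) :
    StrictMonoOn (ψdrift η ν km lamBar) (Set.Ioi (0 : ℝ)) := by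
  intro a ha b hb hab
  simp only [Set.mem_Ioi] at ha hb
  have hqca : 0 < qc a := qc_pos ha
  have hqcb : 0 < qc b := qc_pos hb
  have hqcab : qc a < qc b := qc_strictMonoOn (Set.mem_Ici.mpr ha.le) (Set.mem_Ici.mpr hb.le) hab
  have hq0a : 0 < q0 a := Real.exp_pos _
  have hq0b : 0 < q0 b := Real.exp_pos _
  have hq0ab : q0 b < q0 a := by
    unfold q0
    exact Real.exp_lt_exp.mpr (by linarith)
  -- mu values
  have hmuc : mu ν (qc a) km < mu ν (qc b) km :=
    mu_strictMonoOn ν hν km hkm (Set.mem_Ici.mpr hqca.le) (Set.mem_Ici.mpr hqcb.le) hqcab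
  have hmu0 : mu ν (q0 b) km < mu ν (q0 a) km :=
    mu_strictMonoOn ν hν km hkm (Set.mem_Ici.mpr hq0b.le) (Set.mem_Ici.mpr hq0a.le) hq0ab
  have hmuca : (1:ℝ) ≤ mu ν (qc a) km := mu_ge_one ν _ hν hqca.le km hkm
  have hmu0b : (1:ℝ) ≤ mu ν (q0 b) km := mu_ge_one ν _ hν hq0b.le km hkm
  have hh0 := h0_pos η ν hη hν km hkm
  have hhc := hc_pos η ν hη hν km hkm
  -- decomposition
  have hdecomp : ∀ ρ : ℝ, ψdrift η ν km lamBar ρ =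
      g1 ρ + hc η ν km * (mu ν (qc ρ) km * qc ρ)
        - h0 η ν km * (mu ν (q0 ρ) km * q0 ρ) - lamBar := by
    intro ρ
    simp only [ψdrift, g1, qc, q0]
    ring
  have hg1 : g1 a < g1 b := g1_strictMonoOn (Set.mem_Ici.mpr ha.le) (Set.mem_Ici.mpr hb.le) hab
  have hT2 : mu ν (qc a) km * qc a < mu ν (qc b) km * qc b :=
    mul_lt_mul'' hmuc hqcab (by linarith) hqca.le
  have hT3 : mu ν (q0 b) km * q0 b < mu ν (q0 a) km * q0 a :=
    mul_lt_mul'' hmu0 hq0ab (by linarith) hq0b.le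
  have hT2' := mul_lt_mul_of_pos_left hT2 hhc
  have hT3' := mul_lt_mul_of_pos_left hT3 hh0
  rw [hdecomp a, hdecomp b]
  linarith
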